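/- A vector G = (g₁,…,gₙ) of formal power series in n variables with zero constant terms has a two-sided composition inverse (a vector H of nonunit power series with H∘G = G∘H = I) if and only if det(J_G(θ)) ≠ 0; moreover, when it exists, the composition inverse is unique. -/

import Mathlib

open MvPowerSeries

/-- The formal partial derivative `D_j f = Σ_α (α_j + 1) a_{α + e_j} X^α`. -/
noncomputable def D {F : Type*} [Field F] {n : ℕ} (j : Fin n)
    (f : MvPowerSeries (Fin n) F) : MvPowerSeries (Fin n) F :=
  fun α => ((α j + 1 : ℕ) : F) * coeff (α + Finsupp.single j 1) f

/-- The composition `f ∘ G = Σ_α a_α g₁^{α₁}⋯gₙ^{αₙ}`, defined coefficientwise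
by the (finitely supported) sum of the `γ`-coefficients. -/
noncomputable def comp {F : Type*} [Field F] {n : ℕ}
    (f : MvPowerSeries (Fin n) F) (G : Fin n → MvPowerSeries (Fin n) F) :
    MvPowerSeries (Fin n) F :=
  fun γ => ∑ᶠ α : Fin n →₀ ℕ, coeff α f * coeff γ (∏ i, (G i) ^ (α i))

/-!
Composition with a vector of series without constant terms is Mathlib's `MvPowerSeries.subst`,
so it is an algebra homomorphism and it is associative. Comparing linear terms gives the chain
rule `J(G ∘ H) = J_G * J_H`, which forces `det J_G ≠ 0` as soon as `H ∘ G = X`.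

Conversely, write `G = J_G X + N` with `N` of order at least 2. A right inverse of `G` is a fixed
point of `H ↦ J_G⁻¹ (X - N ∘ H)`, and this map raises the order of differences by one, so its
iterates converge coefficientwise. A right inverse `H` again has an invertible Jacobian, hence a
right inverse `H'`, and associativity gives `G = G ∘ (H ∘ H') = H'`, so `H` is two-sided.
The same associativity argument proves uniqueness.
-/

open Finset
open scoped Matrix

namespace MvPowerSeries

variable {σ τ R : Type*} [CommRing R]

theorem le_order_prod_sub_prod {ι : Type*} {s : Finset ι} {u v : ι → MvPowerSeries τ R}
    {p : ι → ℕ} {d : ℕ∞} (hu : ∀ i ∈ s, (p i : ℕ∞) ≤ (u i).order)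
    (hv : ∀ i ∈ s, (p i : ℕ∞) ≤ (v i).order) (huv : ∀ i ∈ s, d + p i ≤ (u i - v i).order) :
    d + ∑ i ∈ s, (p i : ℕ∞) ≤ (∏ i ∈ s, u i - ∏ i ∈ s, v i).order := by
  classical
  induction s using Finset.induction_on with
  | empty => simp
  | insert j s hj ih =>
    simp only [forall_mem_insert] at hu hv huv
    rw [prod_insert hj, prod_insert hj, sum_insert hj,
      show u j * ∏ i ∈ s, u i - v j * ∏ i ∈ s, v i =
        u j * (∏ i ∈ s, u i - ∏ i ∈ s, v i) + (u j - v j) * ∏ i ∈ s, v i by ring]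
    refine le_trans (le_min ?_ ?_) min_order_le_add
    · calc d + (p j + ∑ i ∈ s, (p i : ℕ∞)) = p j + (d + ∑ i ∈ s, (p i : ℕ∞)) :=
            add_left_comm _ _ _
        _ ≤ _ := add_le_add hu.1 (ih hu.2 hv.2 huv.2)
        _ ≤ _ := le_order_mul
    · calc d + (p j + ∑ i ∈ s, (p i : ℕ∞)) = d + p j + ∑ i ∈ s, (p i : ℕ∞) :=
            (add_assoc _ _ _).symm
        _ ≤ _ := add_le_add huv.1 (le_trans (sum_le_sum hv.2) (le_order_prod _ _))
        _ ≤ _ := le_order_mul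

theorem le_order_pow_sub_pow {x y : MvPowerSeries τ R} (hx : constantCoeff x = 0)
    (hy : constantCoeff y = 0) {d : ℕ∞} (hxy : d + 1 ≤ (x - y).order) (m : ℕ) :
    d + m ≤ (x ^ m - y ^ m).order := by
  simpa using le_order_prod_sub_prod (s := range m) (u := fun _ => x) (v := fun _ => y)
    (p := fun _ => 1) (fun _ _ => by simpa using one_le_order_iff_constCoeff_eq_zero.mpr hx)
    (fun _ _ => by simpa using one_le_order_iff_constCoeff_eq_zero.mpr hy) (fun _ _ => by simpa)

theorem le_order_finsuppProd_pow_sub_finsuppProd_pow {a b : σ → MvPowerSeries τ R}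
    (ha : ∀ i, constantCoeff (a i) = 0) (hb : ∀ i, constantCoeff (b i) = 0) {d : ℕ∞}
    (hab : ∀ i, d + 1 ≤ (a i - b i).order) (e : σ →₀ ℕ) :
    d + e.degree ≤ (e.prod (fun i k => a i ^ k) - e.prod (fun i k => b i ^ k)).order := by
  rw [Finsupp.degree_apply, Nat.cast_sum]
  exact le_order_prod_sub_prod (fun i _ => le_order_pow_of_constantCoeff_eq_zero _ (ha i))
    (fun i _ => le_order_pow_of_constantCoeff_eq_zero _ (hb i))
    (fun i _ => le_order_pow_sub_pow (ha i) (hb i) (hab i) _)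

theorem le_order_subst_sub_subst [Finite σ] {a b : σ → MvPowerSeries τ R}
    (ha : ∀ i, constantCoeff (a i) = 0) (hb : ∀ i, constantCoeff (b i) = 0) {d : ℕ∞}
    (hab : ∀ i, d + 1 ≤ (a i - b i).order) {f : MvPowerSeries σ R} (hf : 2 ≤ f.order) :
    d + 2 ≤ (subst a f - subst b f).order := by
  have ha' := hasSubst_of_constantCoeff_zero ha
  have hb' := hasSubst_of_constantCoeff_zero hb
  refine le_order fun γ hγ => ?_
  rw [map_sub, coeff_subst ha', coeff_subst hb',
    ← finsum_sub_distrib (coeff_subst_finite ha' f γ) (coeff_subst_finite hb' f γ)]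
  refine finsum_eq_zero_of_forall_eq_zero fun e => ?_
  rw [← smul_sub, ← map_sub]
  by_cases he : e.degree < 2
  · rw [coeff_of_lt_order (lt_of_lt_of_le (by exact_mod_cast he) hf), zero_smul]
  · have h2 : (2 : ℕ∞) ≤ e.degree := by exact_mod_cast not_lt.mp he
    rw [coeff_of_lt_order (hγ.trans_le ((add_le_add_right h2 d).trans
      (le_order_finsuppProd_pow_sub_finsuppProd_pow ha hb hab e))), smul_zero]

theorem le_order_mulVec {ι κ : Type*} [Fintype κ] (M : Matrix ι κ (MvPowerSeries σ R))
    {v : κ → MvPowerSeries σ R} {m : ℕ∞} (hv : ∀ j, m ≤ (v j).order) (i : ι) :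
    m ≤ ((M *ᵥ v) i).order :=
  Finset.sum_induction _ (fun x : MvPowerSeries σ R => m ≤ x.order)
    (fun _ _ ha hb => (le_min ha hb).trans min_order_le_add) (by simp)
    fun j _ => (hv j).trans (le_add_self.trans le_order_mul)

theorem exists_fixedPoint_of_order_contracting {ι : Type*}
    (Ψ : (ι → MvPowerSeries σ R) → ι → MvPowerSeries σ R)
    (hΨ₀ : ∀ a, (∀ i, constantCoeff (a i) = 0) → ∀ i, constantCoeff (Ψ a i) = 0)
    (hΨ : ∀ a b, (∀ i, constantCoeff (a i) = 0) → (∀ i, constantCoeff (b i) = 0) →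
      ∀ m : ℕ, (∀ i, (m : ℕ∞) ≤ (a i - b i).order) → ∀ i, (m : ℕ∞) + 1 ≤ (Ψ a i - Ψ b i).order) :
    ∃ a, (∀ i, constantCoeff (a i) = 0) ∧ Ψ a = a := by
  set s : ℕ → ι → MvPowerSeries σ R := fun m => Ψ^[m] 0
  have hs_succ (m : ℕ) : s (m + 1) = Ψ (s m) := Function.iterate_succ_apply' Ψ m 0
  have hs₀ (m : ℕ) : ∀ i, constantCoeff (s m i) = 0 := by
    induction m with
    | zero => simp [s]
    | succ m ih => rw [hs_succ]; exact hΨ₀ _ ih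
  have hs_step (m : ℕ) : ∀ i, (m : ℕ∞) ≤ (s (m + 1) i - s m i).order := by
    induction m with
    | zero => simp
    | succ m ih =>
      have h := hΨ (s (m + 1)) (s m) (hs₀ _) (hs₀ _) m ih
      rw [← hs_succ, ← hs_succ] at h
      exact_mod_cast h
  have hs_cauchy (m k : ℕ) (i : ι) : (m : ℕ∞) ≤ (s (m + k) i - s m i).order := by
    induction k with
    | zero => simp
    | succ k ih =>
      rw [← add_assoc, show s (m + k + 1) i - s m i =
        (s (m + k + 1) i - s (m + k) i) + (s (m + k) i - s m i) by ring]
      exact le_trans (le_min ((Nat.cast_le.mpr (m.le_add_right k)).trans (hs_step _ i)) ih)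
        min_order_le_add
  have hs_coeff {γ : σ →₀ ℕ} {m : ℕ} (hm : γ.degree < m) (i : ι) :
      coeff γ (s m i) = coeff γ (s (γ.degree + 1) i) := by
    obtain ⟨k, rfl⟩ := Nat.exists_eq_add_of_le hm
    rw [← sub_eq_zero, ← map_sub]
    exact coeff_of_lt_order ((Nat.cast_lt.mpr (Nat.lt_succ_self _)).trans_le (hs_cauchy _ k i))
  let lim : ι → MvPowerSeries σ R := fun i γ => coeff γ (s (γ.degree + 1) i)
  have hlim_coeff (γ : σ →₀ ℕ) (i : ι) : coeff γ (lim i) = coeff γ (s (γ.degree + 1) i) := rfl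
  have hlim (m : ℕ) (i : ι) : (m : ℕ∞) ≤ (lim i - s m i).order :=
    nat_le_order fun γ hγ => by
      rw [map_sub, hs_coeff (Nat.cast_lt.mp hγ), hlim_coeff, sub_self]
  have hlim₀ (i : ι) : constantCoeff (lim i) = 0 := by
    rw [← coeff_zero_eq_constantCoeff_apply, hlim_coeff, map_zero, zero_add,
      coeff_zero_eq_constantCoeff_apply, hs₀]
  refine ⟨lim, hlim₀, funext fun i => ?_⟩
  rw [← sub_eq_zero, ← order_eq_top_iff, ← top_le_iff,
    ← ENat.forall_natCast_le_iff_le]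
  intro m _
  rw [show Ψ lim i - lim i = (Ψ lim i - Ψ (s m) i) + -(lim i - s (m + 1) i) by
    rw [← hs_succ]; ring]
  refine le_trans (le_min ?_ ?_) min_order_le_add
  · exact le_trans le_self_add (hΨ _ _ hlim₀ (hs₀ m) m (hlim m) i)
  · rw [order_neg]; exact le_trans (by simp) (hlim (m + 1) i)

theorem eq_of_subst_eq_X [Finite σ] {a b c : σ → MvPowerSeries σ R}
    (hb : ∀ i, constantCoeff (b i) = 0) (hc : ∀ i, constantCoeff (c i) = 0)
    (hab : ∀ i, subst b (a i) = X i) (hbc : ∀ i, subst c (b i) = X i) : a = c := by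
  funext i
  calc a i = subst (fun j => subst c (b j)) (a i) := by simp_rw [hbc, subst_self, id]
    _ = subst c (subst b (a i)) :=
      (subst_comp_subst_apply (hasSubst_of_constantCoeff_zero hb)
        (hasSubst_of_constantCoeff_zero hc) _).symm
    _ = c i := by rw [hab, subst_X (hasSubst_of_constantCoeff_zero hc)]

noncomputable def jacobianAtZero {ι : Type*} (G : ι → MvPowerSeries σ R) : Matrix ι σ R :=
  Matrix.of fun i j => coeff (Finsupp.single j 1) (G i)

theorem jacobianAtZero_X [DecidableEq σ] : jacobianAtZero (X : σ → MvPowerSeries σ R) = 1 := by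
  ext i j
  simp [jacobianAtZero, coeff_X, Matrix.one_apply, Finsupp.single_left_inj, eq_comm]

section Fintype

variable [Fintype σ]

theorem two_le_order_sub_linear {f : MvPowerSeries σ R} (hf : constantCoeff f = 0) :
    2 ≤ (f - ∑ j, C (coeff (Finsupp.single j 1) f) * X j).order := by
  classical
  refine nat_le_order fun d hd => ?_
  simp only [map_sub, map_sum, coeff_C_mul, coeff_X, mul_ite, mul_one, mul_zero]
  interval_cases h : d.degree
  · simp [(Finsupp.degree_eq_zero_iff d).mp h, hf, eq_comm (a := (0 : σ →₀ ℕ))]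
  · obtain ⟨k, rfl⟩ : d ∈ Set.range (Finsupp.single · 1) := Finsupp.range_single_one ▸ h
    simp [Finsupp.single_left_inj]

theorem coeff_single_one_subst {a : σ → MvPowerSeries τ R} (ha : ∀ i, constantCoeff (a i) = 0)
    {f : MvPowerSeries σ R} (hf : constantCoeff f = 0) (k : τ) :
    coeff (Finsupp.single k 1) (subst a f) =
      ∑ j, coeff (Finsupp.single j 1) f * coeff (Finsupp.single k 1) (a j) := by
  have ha' := hasSubst_of_constantCoeff_zero ha
  set r := f - ∑ j, C (coeff (Finsupp.single j 1) f) * X j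
  have hr : 2 ≤ (subst a r).order := by
    refine le_trans ?_ (le_order_subst ha' r)
    calc (2 : ℕ∞) = 1 * 2 := (one_mul _).symm
      _ ≤ _ := mul_le_mul' (le_iInf fun i => one_le_order_iff_constCoeff_eq_zero.mpr (ha i))
          (two_le_order_sub_linear hf)
  have hsplit : subst a f = ∑ j, C (coeff (Finsupp.single j 1) f) * a j + subst a r := by
    conv_lhs => rw [show f = ∑ j, C (coeff (Finsupp.single j 1) f) * X j + r by ring]
    rw [← coe_substAlgHom ha', map_add, map_sum]
    simp [subst_mul ha', subst_X ha']
  rw [hsplit, map_add, coeff_of_lt_order (hr.trans_lt' (by simp)), add_zero, map_sum]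
  simp only [coeff_C_mul]

theorem jacobianAtZero_subst {ι : Type*} {a : σ → MvPowerSeries τ R}
    (ha : ∀ i, constantCoeff (a i) = 0) {G : ι → MvPowerSeries σ R}
    (hG : ∀ i, constantCoeff (G i) = 0) :
    jacobianAtZero (fun i => subst a (G i)) = jacobianAtZero G * jacobianAtZero a := by
  ext i k
  simp [jacobianAtZero, Matrix.mul_apply, coeff_single_one_subst ha (hG i)]

theorem exists_subst_rightInverse [DecidableEq σ] {G : σ → MvPowerSeries σ R}
    (hG : ∀ i, constantCoeff (G i) = 0) (hJ : IsUnit (jacobianAtZero G).det) :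
    ∃ H : σ → MvPowerSeries σ R, (∀ i, constantCoeff (H i) = 0) ∧ ∀ i, subst H (G i) = X i := by
  set J := jacobianAtZero G
  set N : σ → MvPowerSeries σ R := fun j => G j - ∑ i, C (J j i) * X i
  have hN (j : σ) : 2 ≤ (N j).order := two_le_order_sub_linear (hG j)
  have hN₀ (j : σ) : constantCoeff (N j) = 0 :=
    one_le_order_iff_constCoeff_eq_zero.mp (le_trans (by norm_num) (hN j))
  have subst_linear (H : σ → MvPowerSeries σ R) (hH : ∀ i, constantCoeff (H i) = 0) (l : σ) :
      subst H (∑ i, C (J l i) * X i) = (J.map C *ᵥ H) l := by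
    have hH' := hasSubst_of_constantCoeff_zero hH
    rw [← coe_substAlgHom hH', map_sum]
    simp [subst_mul hH', subst_X hH', Matrix.mulVec, dotProduct]
  let Ψ : (σ → MvPowerSeries σ R) → σ → MvPowerSeries σ R :=
    fun H => J⁻¹.map C *ᵥ (X - fun j => subst H (N j))
  have hΨ₀ (a : σ → MvPowerSeries σ R) (ha : ∀ i, constantCoeff (a i) = 0) (i : σ) :
      constantCoeff (Ψ a i) = 0 := by
    simp [Ψ, Matrix.mulVec, dotProduct,
      constantCoeff_subst_eq_zero (hasSubst_of_constantCoeff_zero ha) ha (hN₀ _)]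
  have hΨ (a b : σ → MvPowerSeries σ R) (ha : ∀ i, constantCoeff (a i) = 0)
      (hb : ∀ i, constantCoeff (b i) = 0) (m : ℕ) (hab : ∀ i, (m : ℕ∞) ≤ (a i - b i).order)
      (i : σ) : (m : ℕ∞) + 1 ≤ (Ψ a i - Ψ b i).order := by
    rcases m with _ | d
    · rw [Nat.cast_zero, zero_add, one_le_order_iff_constCoeff_eq_zero, map_sub, hΨ₀ a ha,
        hΨ₀ b hb, sub_zero]
    have hdiff : Ψ a - Ψ b = J⁻¹.map C *ᵥ fun j => subst b (N j) - subst a (N j) := by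
      simp only [Ψ, ← Matrix.mulVec_sub]
      congr 1
      ext1 j
      simp
    have hba (k : σ) : (d : ℕ∞) + 1 ≤ (b k - a k).order := by
      rw [← order_neg, neg_sub]
      exact_mod_cast hab k
    rw [← Pi.sub_apply, hdiff]
    refine le_order_mulVec _ (fun j => ?_) i
    convert le_order_subst_sub_subst hb ha hba (hN j) using 1
    push_cast
    ring
  obtain ⟨H, hH₀, hH⟩ := exists_fixedPoint_of_order_contracting Ψ hΨ₀ hΨ
  refine ⟨H, hH₀, fun l => ?_⟩
  have hlin : J.map C *ᵥ H = X - fun j => subst H (N j) := by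
    conv_lhs => rw [← hH]
    rw [Matrix.mulVec_mulVec, ← Matrix.map_mul, Matrix.mul_nonsing_inv _ hJ, Matrix.map_one _
      (map_zero _) (map_one _), Matrix.one_mulVec]
  have hsplit : G l = ∑ i, C (J l i) * X i + N l := by ring
  rw [hsplit, subst_add (hasSubst_of_constantCoeff_zero hH₀), subst_linear H hH₀, hlin]
  simp

theorem exists_subst_inverse [DecidableEq σ] {G : σ → MvPowerSeries σ R}
    (hG : ∀ i, constantCoeff (G i) = 0) (hJ : IsUnit (jacobianAtZero G).det) :
    ∃ H : σ → MvPowerSeries σ R, (∀ i, constantCoeff (H i) = 0) ∧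
      (∀ i, subst G (H i) = X i) ∧ ∀ i, subst H (G i) = X i := by
  obtain ⟨H, hH₀, hGH⟩ := exists_subst_rightInverse hG hJ
  have hJH : jacobianAtZero G * jacobianAtZero H = 1 := by
    rw [← jacobianAtZero_subst hH₀ hG]
    simp_rw [hGH, jacobianAtZero_X]
  obtain ⟨H', hH'₀, hHH'⟩ := exists_subst_rightInverse hH₀ (Matrix.isUnit_det_of_left_inverse hJH)
  obtain rfl : G = H' := eq_of_subst_eq_X hH₀ hH'₀ hGH hHH'
  exact ⟨H, hH₀, hHH', hGH⟩

end Fintype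

end MvPowerSeries

theorem comp_eq_subst {F : Type*} [Field F] {n : ℕ} {G : Fin n → MvPowerSeries (Fin n) F}
    (hG : ∀ i, constantCoeff (G i) = 0) (f : MvPowerSeries (Fin n) F) :
    comp f G = subst G f := by
  ext γ
  rw [coeff_subst (hasSubst_of_constantCoeff_zero hG)]
  exact finsum_congr fun α => by rw [smul_eq_mul, Finsupp.prod_pow]

/-- A nonunit vector `G` has a two-sided composition inverse (a nonunit vector
`H` with `H ∘ G = G ∘ H = (x₁,…,xₙ)`) iff `det J_G(θ) ≠ 0`; moreover the
composition inverse, when it exists, is unique. -/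
theorem comp_inverse_iff_det_ne_zero_and_unique {F : Type*} [Field F] {n : ℕ}
    (G : Fin n → MvPowerSeries (Fin n) F)
    (hG : ∀ i, coeff 0 (G i) = 0) :
    ((∃ H : Fin n → MvPowerSeries (Fin n) F,
        (∀ i, coeff 0 (H i) = 0) ∧
        (∀ i, comp (H i) G = MvPowerSeries.X i) ∧
        (∀ i, comp (G i) H = MvPowerSeries.X i)) ↔
      (Matrix.of fun i j => coeff (Finsupp.single j 1) (G i)).det ≠ 0) ∧
    (∀ H₁ H₂ : Fin n → MvPowerSeries (Fin n) F,
      (∀ i, coeff 0 (H₁ i) = 0) → (∀ i, comp (H₁ i) G = MvPowerSeries.X i) →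
      (∀ i, comp (G i) H₁ = MvPowerSeries.X i) →
      (∀ i, coeff 0 (H₂ i) = 0) → (∀ i, comp (H₂ i) G = MvPowerSeries.X i) →
      (∀ i, comp (G i) H₂ = MvPowerSeries.X i) → H₁ = H₂) := by
  have hG₀ : ∀ i, constantCoeff (G i) = 0 := by simpa using hG
  have comp_eq {H : Fin n → MvPowerSeries (Fin n) F} (hH : ∀ i, coeff 0 (H i) = 0) :
      ∀ f, comp f H = subst H f :=
    comp_eq_subst (by simpa using hH)
  refine ⟨⟨fun ⟨H, hH₀, hHG, _⟩ => ?_, fun hJ => ?_⟩,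
    fun H₁ H₂ hH₁ _ hGH₁ _ hH₂G _ => ?_⟩
  · have hJ : jacobianAtZero H * jacobianAtZero G = 1 := by
      rw [← jacobianAtZero_subst hG₀ (by simpa using hH₀)]
      simp_rw [← comp_eq hG, hHG, jacobianAtZero_X]
    exact (Matrix.isUnit_det_of_left_inverse hJ).ne_zero
  · obtain ⟨H, hH₀, hHG, hGH⟩ := exists_subst_inverse hG₀ (isUnit_iff_ne_zero.mpr hJ)
    have hH₀' : ∀ i, coeff 0 (H i) = 0 := by simpa using hH₀
    exact ⟨H, hH₀', fun i => (comp_eq hG _).trans (hHG i),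
      fun i => (comp_eq hH₀' _).trans (hGH i)⟩
  · refine (eq_of_subst_eq_X hG₀ (by simpa using hH₁) (fun i => ?_) (fun i => ?_)).symm
    · rw [← comp_eq hG, hH₂G]
    · rw [← comp_eq hH₁, hGH₁]
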